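/- Let x : I × Ω → ℝ³ be a parametrised evolving surface, let F̂ : ℝ × ℝ³ → ℝ be continuously differentiable, and set f(t, ξ) := F̂(t, x(t, ξ)). Fix (t, ξ) ∈ I × Ω, write V := ∂ₜx(t, ξ), let N be a unit normal to the tangent plane span{∂₁x(t,ξ), ∂₂x(t,ξ)}, and let u = Σ_{i ∈ {1,2}} uⁱ ∂ᵢx(t, ξ) be a tangent vector. Then ∂ₜF̂(t, x(t,ξ)) + (∇ₓF̂(t, x(t,ξ)) · N)(V · N) + (P(t,ξ) ∇ₓF̂(t, x(t,ξ))) · (V + u) = ∂ₜf(t, ξ) + Σ_{i ∈ {1,2}} uⁱ ∂ᵢf(t, ξ). In particular, the generalised optical flow equation d_t^N F + ∇_M F · (V + u) = 0 holds at (t, ξ) if and only if the parametrised equation ∂ₜf + uⁱ ∂ᵢf = 0 holds there. -/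

import Mathlib

open scoped RealInnerProductSpace

/-- The spatial partial derivative `∂ᵢx(t, ξ)` of a parametrised evolving surface
`x : ℝ × ℝ² → ℝ³` in the `i`-th coordinate direction. -/
noncomputable def spatialPD (x : ℝ × EuclideanSpace ℝ (Fin 2) → EuclideanSpace ℝ (Fin 3))
    (i : Fin 2) (t : ℝ) (ξ : EuclideanSpace ℝ (Fin 2)) : EuclideanSpace ℝ (Fin 3) :=
  fderiv ℝ (fun η => x (t, η)) ξ (EuclideanSpace.single i 1)

/-- The surface velocity `V(t, ξ) = ∂ₜx(t, ξ)` of a parametrised evolving surface. -/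
noncomputable def surfVel (x : ℝ × EuclideanSpace ℝ (Fin 2) → EuclideanSpace ℝ (Fin 3))
    (t : ℝ) (ξ : EuclideanSpace ℝ (Fin 2)) : EuclideanSpace ℝ (Fin 3) :=
  deriv (fun s => x (s, ξ)) t

/-!
By the chain rule, `∂ₜf = ∂ₜF̂ + ∇F̂ · V` and `∂ᵢf = ∇F̂ · ∂ᵢx`. Since the `∂ᵢx` are independent and
orthogonal to the unit vector `N`, the tangent plane is `N^⊥`, so `P ∇F̂ = ∇F̂ - (∇F̂ · N) N`. Pairing
with `V + u`, the projection loses exactly `(∇F̂ · N)(V · N)`, which the normal time derivative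
restores; `u` is tangent and loses nothing.
-/

section Projection

variable {E : Type*} [NormedAddCommGroup E] [InnerProductSpace ℝ E]

theorem Submodule.orthogonal_span_range_eq_span_singleton [FiniteDimensional ℝ E]
    {ι : Type*} [Fintype ι] {v : ι → E} (hv : LinearIndependent ℝ v)
    (hdim : Fintype.card ι + 1 = Module.finrank ℝ E) {N : E} (hN : N ≠ 0)
    (hNv : ∀ i, ⟪N, v i⟫ = 0) :
    (span ℝ (Set.range v))ᗮ = ℝ ∙ N := by
  have hNmem : N ∈ (span ℝ (Set.range v))ᗮ := by
    rw [← span_singleton_le_iff_mem, ← isOrtho_iff_le, isOrtho_span]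
    rintro _ rfl _ ⟨i, rfl⟩
    exact hNv i
  refine eq_span_singleton_of_mem_of_finrank_eq_one ?_ hNmem hN
  exact finrank_add_finrank_orthogonal' (by rwa [finrank_span_eq_card hv])

theorem Submodule.inner_starProjection_of_orthogonal_eq_span_singleton (K : Submodule ℝ E)
    [K.HasOrthogonalProjection] {N : E} (hK : Kᗮ = ℝ ∙ N) (hN : ‖N‖ = 1) (G w : E) :
    ⟪K.starProjection G, w⟫ = ⟪G, w⟫ - ⟪G, N⟫ * ⟪w, N⟫ := by
  have hnormal : Kᗮ.starProjection G = ⟪N, G⟫ • N := by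
    simp only [hK, starProjection_singleton, hN, one_pow, RCLike.ofReal_one, div_one]
  have hsplit := K.starProjection_add_starProjection_orthogonal G
  rw [hnormal, ← eq_sub_iff_add_eq] at hsplit
  rw [hsplit, inner_sub_left, real_inner_smul_left, real_inner_comm N G, real_inner_comm N w]

end Projection

section ChainRule

variable {E : Type*} [NormedAddCommGroup E] [InnerProductSpace ℝ E] [CompleteSpace E]

theorem deriv_comp_prodMk_eq_add_inner_gradient {F : ℝ × E → ℝ} {c : ℝ → E} {t : ℝ}
    (hF : DifferentiableAt ℝ F (t, c t)) (hc : DifferentiableAt ℝ c t) :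
    deriv (fun s => F (s, c s)) t =
      deriv (fun s => F (s, c t)) t + ⟪gradient (fun y => F (t, y)) (c t), deriv c t⟫ := by
  have hmoving : HasDerivAt (fun s => F (s, c s)) (fderiv ℝ F (t, c t) (1, deriv c t)) t :=
    hF.hasFDerivAt.comp_hasDerivAt t ((hasDerivAt_id t).prodMk hc.hasDerivAt)
  have hfixed : HasDerivAt (fun s => F (s, c t)) (fderiv ℝ F (t, c t) (1, 0)) t :=
    hF.hasFDerivAt.comp_hasDerivAt t ((hasDerivAt_id t).prodMk (hasDerivAt_const t (c t)))
  have hspace : HasFDerivAt (fun y => F (t, y))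
      ((fderiv ℝ F (t, c t)).comp (.inr ℝ ℝ E)) (c t) :=
    hF.hasFDerivAt.comp (c t) (hasFDerivAt_prodMk_right t (c t))
  rw [hmoving.deriv, hfixed.deriv, inner_gradient_left, hspace.fderiv,
    ContinuousLinearMap.comp_apply, ContinuousLinearMap.inr_apply, ← map_add, Prod.mk_add_mk,
    add_zero, zero_add]

theorem fderiv_comp_apply_eq_inner_gradient {P : Type*} [NormedAddCommGroup P] [NormedSpace ℝ P]
    {φ : E → ℝ} {ψ : P → E} {ξ : P} (hφ : DifferentiableAt ℝ φ (ψ ξ))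
    (hψ : DifferentiableAt ℝ ψ ξ) (w : P) :
    fderiv ℝ (fun η => φ (ψ η)) ξ w = ⟪gradient φ (ψ ξ), fderiv ℝ ψ ξ w⟫ := by
  rw [inner_gradient_left, ← Function.comp_def, fderiv_comp ξ hφ hψ]
  rfl

end ChainRule

/-- **The generalised optical flow equation in local coordinates.** For a `C²` parametrised
evolving surface `x : I × Ω → ℝ³`, a `C¹` (normally constant) extension `F̂ : ℝ × ℝ³ → ℝ` of
the data with `f(t, ξ) := F̂(t, x(t, ξ))`, a unit normal `N` at `(t, ξ)`, and a tangent vector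
`u = ∑ᵢ uⁱ ∂ᵢx(t, ξ)`, the quantity `d_t^N F + ∇_M F · (V + u)` equals `∂ₜf + ∑ᵢ uⁱ ∂ᵢf`;
in particular the generalised optical flow equation holds iff the parametrised one does. -/
theorem generalised_optical_flow_equation_parametrised
    (a b : ℝ) (Ω : Set (EuclideanSpace ℝ (Fin 2))) (hΩ : IsOpen Ω)
    (x : ℝ × EuclideanSpace ℝ (Fin 2) → EuclideanSpace ℝ (Fin 3))
    (hx : ContDiffOn ℝ 2 x (Set.Ioo a b ×ˢ Ω))
    (F : ℝ × EuclideanSpace ℝ (Fin 3) → ℝ) (hF : ContDiff ℝ 1 F)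
    (t : ℝ) (ht : t ∈ Set.Ioo a b) (ξ : EuclideanSpace ℝ (Fin 2)) (hξ : ξ ∈ Ω)
    (hli : LinearIndependent ℝ fun i : Fin 2 => spatialPD x i t ξ)
    (N : EuclideanSpace ℝ (Fin 3)) (hN : ‖N‖ = 1)
    (hNorth : ∀ i : Fin 2, ⟪N, spatialPD x i t ξ⟫ = 0)
    (u : Fin 2 → ℝ) :
    deriv (fun s => F (s, x (t, ξ))) t +
        ⟪gradient (fun y => F (t, y)) (x (t, ξ)), N⟫ * ⟪surfVel x t ξ, N⟫ +
        ⟪(Submodule.orthogonalProjection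
              (Submodule.span ℝ (Set.range fun i : Fin 2 => spatialPD x i t ξ))
              (gradient (fun y => F (t, y)) (x (t, ξ))) : EuclideanSpace ℝ (Fin 3)),
          surfVel x t ξ + ∑ i : Fin 2, u i • spatialPD x i t ξ⟫ =
      deriv (fun s => F (s, x (s, ξ))) t +
        ∑ i : Fin 2, u i *
          fderiv ℝ (fun η => F (t, x (t, η))) ξ (EuclideanSpace.single i 1) ∧
    ((deriv (fun s => F (s, x (t, ξ))) t +
        ⟪gradient (fun y => F (t, y)) (x (t, ξ)), N⟫ * ⟪surfVel x t ξ, N⟫ +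
        ⟪(Submodule.orthogonalProjection
              (Submodule.span ℝ (Set.range fun i : Fin 2 => spatialPD x i t ξ))
              (gradient (fun y => F (t, y)) (x (t, ξ))) : EuclideanSpace ℝ (Fin 3)),
          surfVel x t ξ + ∑ i : Fin 2, u i • spatialPD x i t ξ⟫ = 0) ↔
      (deriv (fun s => F (s, x (s, ξ))) t +
        ∑ i : Fin 2, u i *
          fderiv ℝ (fun η => F (t, x (t, η))) ξ (EuclideanSpace.single i 1) = 0)) := by
  refine (fun key => ⟨key, by rw [key]⟩) ?_
  have hxd : DifferentiableAt ℝ x (t, ξ) :=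
    (hx.contDiffAt ((isOpen_Ioo.prod hΩ).mem_nhds ⟨ht, hξ⟩)).differentiableAt (by norm_num)
  have hFd : Differentiable ℝ F := hF.differentiable one_ne_zero
  have hxt : DifferentiableAt ℝ (fun s => x (s, ξ)) t :=
    hxd.comp t (differentiableAt_id.prodMk (differentiableAt_const ξ))
  have hxξ : DifferentiableAt ℝ (fun η => x (t, η)) ξ :=
    hxd.comp ξ ((differentiableAt_const t).prodMk differentiableAt_id)
  have hFt : DifferentiableAt ℝ (fun y => F (t, y)) (x (t, ξ)) :=
    (hFd _).comp _ ((differentiableAt_const t).prodMk differentiableAt_id)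
  have hnormal_line :
      (Submodule.span ℝ (Set.range fun i : Fin 2 => spatialPD x i t ξ))ᗮ = ℝ ∙ N :=
    Submodule.orthogonal_span_range_eq_span_singleton hli (by simp)
      (by rw [← norm_ne_zero_iff, hN]; exact one_ne_zero) hNorth
  have hft := deriv_comp_prodMk_eq_add_inner_gradient (c := fun s => x (s, ξ)) (hFd _) hxt
  have hfξ (i : Fin 2) : fderiv ℝ (fun η => F (t, x (t, η))) ξ (EuclideanSpace.single i 1) =
      ⟪gradient (fun y => F (t, y)) (x (t, ξ)), spatialPD x i t ξ⟫ :=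
    fderiv_comp_apply_eq_inner_gradient (ψ := fun η => x (t, η)) hFt hxξ _
  have hNorth_left (i : Fin 2) : ⟪spatialPD x i t ξ, N⟫ = 0 := by
    rw [real_inner_comm]; exact hNorth i
  simp only [← Submodule.starProjection_apply,
    Submodule.inner_starProjection_of_orthogonal_eq_span_singleton _ hnormal_line hN, hft, hfξ,
    surfVel, inner_add_left, inner_add_right, inner_sum, sum_inner, real_inner_smul_left,
    real_inner_smul_right, hNorth_left, mul_zero, Finset.sum_const_zero]
  ring
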